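/- Let f : {0,1}ⁿ → ℝ satisfy condition (2.4) with constant v > 0, and let B = max over x ∈ {0,1}ⁿ and 1 ≤ i ≤ n of |f(x) − f(x^{(i)})|. Then for all 0 < δ < γ ≤ 1/2, the quantiles of f(X) satisfy Q_{1−δ} − Q_{1−γ} ≤ B + sqrt( (72/5)·v·γ / ( δ · log( e²/(2γ) ) ) ). -/

import Mathlib

open scoped Classical
open Finset

/-- Probability of an event under the uniform distribution on `{0,1}ⁿ`. -/
noncomputable def prb {n : ℕ} (P : (Fin n → Fin 2) → Prop) : ℝ :=
  ((Finset.univ.filter P).card : ℝ) / 2 ^ n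

/-- `x^{(i)}`: flip the `i`-th bit of `x`. -/
noncomputable def flipBit {n : ℕ} (x : Fin n → Fin 2) (i : Fin n) : Fin n → Fin 2 :=
  Function.update x i (x i + 1)

/-- The `α`-quantile `Q_α = inf { z : P{f(X) ≤ z} ≥ α }`. -/
noncomputable def quant {n : ℕ} (f : (Fin n → Fin 2) → ℝ) (α : ℝ) : ℝ :=
  sInf {z : ℝ | α ≤ prb fun x => f x ≤ z}

/-- Expectation of `f(X)` for `X` uniform on `{0,1}ⁿ`. -/
noncomputable def expecb {n : ℕ} (f : (Fin n → Fin 2) → ℝ) : ℝ :=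
  (∑ x, f x) / 2 ^ n

/-- Variance of `f(X)` for `X` uniform on `{0,1}ⁿ`. -/
noncomputable def varb {n : ℕ} (f : (Fin n → Fin 2) → ℝ) : ℝ :=
  expecb fun x => (f x - expecb f) ^ 2

/-!
Let `a` and `b` be the `(1 - γ)`- and `(1 - δ)`-quantiles and suppose `b - a = B + t` with `t > 0`.
The truncation `g = min (f - a - B)₊ t` vanishes off `{f > a}`, an event of probability
`p ≤ γ`, and equals `t` on `{f ≥ b}`, an event of probability `q ≥ δ`. Every neighbour of a point
outside `{f > a}` lies in `{f ≤ a + B}`, where `g = 0`, and truncation only shrinks the negative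
parts of the increments, so (2.4) bounds the Dirichlet energy of `g` by `2 v p`. Jensen's
inequality on the support of `g²`, the log-Sobolev inequality on the cube (the two-point
inequality, tensorized by induction on `n`) and this energy bound give
`t² q log (1 / p) ≤ 𝔼 g² log (1 / p) ≤ Ent (g²) ≤ v p`.
Since `p ↦ log (1 / p) / p` is decreasing, `t² δ log (1 / γ) ≤ v γ`, and
`log (e² / (2 γ)) ≤ (72 / 5) log (1 / γ)` for `γ ≤ 1 / 2`.
-/

open Real

noncomputable def twoPointEnt (p q : ℝ) : ℝ :=
  (p * log p + q * log q) / 2 - (p + q) / 2 * log ((p + q) / 2)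

theorem two_mul_log_le_sub_inv {y : ℝ} (hy : 1 ≤ y) : 2 * log y ≤ y - y⁻¹ := by
  have h := Real.self_le_sinh_iff.2 (log_nonneg hy)
  rw [Real.sinh_log (by linarith)] at h
  linarith

theorem mul_log_sq_div_le {a b : ℝ} (hb : 0 ≤ b) (hab : b < a) :
    a * log (a ^ 2 / ((a ^ 2 + b ^ 2) / 2)) ≤ a - b := by
  have ha : 0 < a := hb.trans_lt hab
  set r := √((a ^ 2 + b ^ 2) / 2)
  have hr : 0 < r := Real.sqrt_pos.2 (by positivity)
  have hr2 : r ^ 2 = (a ^ 2 + b ^ 2) / 2 := Real.sq_sqrt (by positivity)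
  have hra : r ≤ a := Real.sqrt_le_iff.2 ⟨ha.le, by nlinarith⟩
  have hrab : a + b ≤ 2 * r := by nlinarith [sq_nonneg (a - b)]
  have hlog : log (a ^ 2 / ((a ^ 2 + b ^ 2) / 2)) = 2 * log (a / r) := by
    rw [← hr2, ← div_pow, log_pow]
    push_cast
    ring
  calc a * log (a ^ 2 / ((a ^ 2 + b ^ 2) / 2)) ≤ a * (a / r - (a / r)⁻¹) := by
        rw [hlog]
        exact mul_le_mul_of_nonneg_left (two_mul_log_le_sub_inv ((one_le_div hr).2 hra)) ha.le
    _ = (a - b) * ((a + b) / (2 * r)) := by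
        field_simp
        linear_combination (-2) * hr2
    _ ≤ a - b := mul_le_of_le_one_right (by linarith) ((div_le_one (by positivity)).2 hrab)

theorem twoPointEnt_sq_le_of_le {a b : ℝ} (hb : 0 ≤ b) (hab : b ≤ a) :
    twoPointEnt (a ^ 2) (b ^ 2) ≤ (a - b) ^ 2 / 2 := by
  let G : ℝ → ℝ := fun x => (x - b) ^ 2 / 2 - (x ^ 2 * log (x ^ 2) + b ^ 2 * log (b ^ 2)) / 2
      + (x ^ 2 + b ^ 2) / 2 * log ((x ^ 2 + b ^ 2) / 2)
  have hG : ∀ x, b < x → HasDerivAt G ((x - b) - x * log (x ^ 2 / ((x ^ 2 + b ^ 2) / 2))) x := by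
    intro x hx
    have hx0 : 0 < x := hb.trans_lt hx
    have hsq := hasDerivAt_pow 2 x
    have h1 := (hasDerivAt_mul_log (x := x ^ 2) (by positivity)).comp x hsq
    have h2 := (hasDerivAt_mul_log (x := (x ^ 2 + b ^ 2) / 2) (by positivity)).comp x
      ((hsq.add_const (b ^ 2)).div_const 2)
    refine ((((hasDerivAt_id x).sub_const b).pow 2 |>.div_const 2 |>.sub
      ((h1.add_const (b ^ 2 * log (b ^ 2))).div_const 2)).add h2).congr_deriv ?_
    rw [log_div (x := x ^ 2) (by positivity) (by positivity)]
    norm_num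
    ring
  have hmono : MonotoneOn G (Set.Ici b) := by
    refine monotoneOn_of_hasDerivWithinAt_nonneg (convex_Ici b)
      (f' := fun x => (x - b) - x * log (x ^ 2 / ((x ^ 2 + b ^ 2) / 2))) ?_ ?_ ?_
    · unfold G
      fun_prop
    · rw [interior_Ici]
      exact fun x hx => (hG x hx).hasDerivWithinAt
    · rw [interior_Ici]
      exact fun x hx => sub_nonneg.2 (mul_log_sq_div_le hb hx)
  have hGba := hmono Set.self_mem_Ici hab hab
  simp only [G, sub_self, add_self_div_two] at hGba
  rw [twoPointEnt]
  linarith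

theorem twoPointEnt_sq_le (a b : ℝ) : twoPointEnt (a ^ 2) (b ^ 2) ≤ (a - b) ^ 2 / 2 := by
  have habs : (|a| - |b|) ^ 2 ≤ (a - b) ^ 2 :=
    sq_le_sq.2 (by simpa using abs_abs_sub_abs_le a b)
  rcases le_total |b| |a| with h | h
  · have := twoPointEnt_sq_le_of_le (abs_nonneg b) h
    rw [sq_abs, sq_abs] at this
    linarith
  · have := twoPointEnt_sq_le_of_le (abs_nonneg a) h
    rw [sq_abs, sq_abs, twoPointEnt, add_comm (b ^ 2), add_comm (b ^ 2 * _)] at this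
    rw [twoPointEnt]
    nlinarith

theorem sum_mul_log_sum_div_card_le {α : Type*} [Fintype α] (h : α → ℝ) (S : Finset α)
    (hh : ∀ x, 0 ≤ h x) (hS : ∀ x ∉ S, h x = 0) :
    (∑ x, h x) * log ((∑ x, h x) / #S) ≤ ∑ x, h x * log (h x) := by
  rw [← sum_subset (subset_univ S) fun x _ hx => hS x hx,
    ← sum_subset (subset_univ S) fun x _ hx => by rw [hS x hx, zero_mul]]
  rcases S.eq_empty_or_nonempty with rfl | hne
  · simp
  have hk : (0 : ℝ) < #S := by exact_mod_cast hne.card_pos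
  have hJ := convexOn_mul_log.map_sum_le (t := S) (w := fun _ => (#S : ℝ)⁻¹) (p := h)
    (fun _ _ => by positivity) (by simp [hk.ne']) (fun x _ => Set.mem_Ici.2 (hh x))
  simp only [smul_eq_mul, ← mul_sum] at hJ
  rw [inv_mul_eq_div] at hJ
  have := mul_le_mul_of_nonneg_left hJ hk.le
  rwa [← mul_assoc, mul_div_cancel₀ _ hk.ne', mul_inv_cancel_left₀ hk.ne'] at this

theorem sq_eq_max_sq_add_max_neg_sq (d : ℝ) : d ^ 2 = max d 0 ^ 2 + max (-d) 0 ^ 2 := by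
  rcases le_total d 0 with h | h
  · rw [max_eq_right h, max_eq_left (neg_nonneg.2 h)]
    ring
  · rw [max_eq_left h, max_eq_right (neg_nonpos.2 h)]
    ring

theorem max_neg_sub_clamp_le (c t u w : ℝ) :
    max (-(min (max (u - c) 0) t - min (max (w - c) 0) t)) 0 ≤ max (-(u - w)) 0 := by
  simp only [max_def, min_def]
  split_ifs <;> linarith

section Cube

variable {n : ℕ}

theorem expecb_mono {g h : (Fin n → Fin 2) → ℝ} (hgh : ∀ x, g x ≤ h x) :
    expecb g ≤ expecb h :=
  div_le_div_of_nonneg_right (sum_le_sum fun x _ => hgh x) (by positivity)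

theorem expecb_add (g h : (Fin n → Fin 2) → ℝ) :
    expecb (fun x => g x + h x) = expecb g + expecb h := by
  simp only [expecb, sum_add_distrib, add_div]

theorem expecb_ite (P : (Fin n → Fin 2) → Prop) (m : ℝ) :
    expecb (fun x => if P x then m else 0) = m * prb P := by
  simp only [expecb, prb, sum_ite, sum_const, nsmul_eq_mul]
  ring

theorem prb_nonneg (P : (Fin n → Fin 2) → Prop) : 0 ≤ prb P := by
  unfold prb
  positivity

theorem prb_mono {P Q : (Fin n → Fin 2) → Prop} (h : ∀ x, P x → Q x) : prb P ≤ prb Q :=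
  div_le_div_of_nonneg_right
    (by exact_mod_cast card_le_card (monotone_filter_right _ fun x _ => h x)) (by positivity)

theorem prb_not (P : (Fin n → Fin 2) → Prop) : prb (fun x => ¬ P x) = 1 - prb P := by
  rw [eq_sub_iff_add_eq', prb, prb, ← add_div, ← Nat.cast_add, card_filter_add_card_filter_not]
  simp

theorem prb_le_one (P : (Fin n → Fin 2) → Prop) : prb P ≤ 1 := by
  linarith [prb_not P, prb_nonneg fun x => ¬ P x]

theorem filter_nonempty_of_prb_pos {P : (Fin n → Fin 2) → Prop} (h : 0 < prb P) :
    (univ.filter P).Nonempty := by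
  rw [← card_pos]
  exact_mod_cast pos_of_mul_pos_left h (by positivity : (0 : ℝ) ≤ (2 ^ n)⁻¹)

theorem expecb_succ (F : (Fin (n + 1) → Fin 2) → ℝ) :
    expecb F = (expecb (fun x => F (Fin.cons 0 x)) + expecb (fun x => F (Fin.cons 1 x))) / 2 := by
  simp only [expecb, ← Fintype.sum_equiv (Fin.consEquiv fun _ => Fin 2)
    (fun p => F (Fin.cons p.1 p.2)) F fun _ => rfl, Fintype.sum_prod_type, Fin.sum_univ_two,
    pow_succ]
  ring

theorem flipBit_cons_zero (c : Fin 2) (x : Fin n → Fin 2) :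
    flipBit (Fin.cons c x) 0 = Fin.cons (c + 1) x := by
  rw [flipBit, Fin.cons_zero, Fin.update_cons_zero]

theorem flipBit_cons_succ (c : Fin 2) (x : Fin n → Fin 2) (i : Fin n) :
    flipBit (Fin.cons c x) i.succ = Fin.cons c (flipBit x i) := by
  rw [flipBit, flipBit, Fin.cons_succ, ← Fin.cons_update]

theorem flipBit_involutive (i : Fin n) : Function.Involutive fun x => flipBit x i := by
  intro x
  have : ∀ c : Fin 2, c + 1 + 1 = c := by decide
  simp [flipBit, this]

end Cube

section LogSobolev

variable {n : ℕ}

noncomputable def entb (h : (Fin n → Fin 2) → ℝ) : ℝ :=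
  expecb (fun x => h x * log (h x)) - expecb h * log (expecb h)

noncomputable def energyb (g : (Fin n → Fin 2) → ℝ) : ℝ :=
  expecb fun x => ∑ i, (g x - g (flipBit x i)) ^ 2

theorem entb_succ (h : (Fin (n + 1) → Fin 2) → ℝ) :
    entb h = (entb (fun x => h (Fin.cons 0 x)) + entb (fun x => h (Fin.cons 1 x))) / 2
      + twoPointEnt (expecb fun x => h (Fin.cons 0 x)) (expecb fun x => h (Fin.cons 1 x)) := by
  simp only [entb, twoPointEnt, expecb_succ h, expecb_succ fun y => h y * log (h y)]
  ring

theorem energyb_succ (g : (Fin (n + 1) → Fin 2) → ℝ) :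
    energyb g = (energyb (fun x => g (Fin.cons 0 x)) + energyb (fun x => g (Fin.cons 1 x))) / 2
      + expecb (fun x => (g (Fin.cons 0 x) - g (Fin.cons 1 x)) ^ 2) := by
  have h01 : (0 : Fin 2) + 1 = 1 := rfl
  have h10 : (1 : Fin 2) + 1 = 0 := rfl
  simp only [energyb]
  rw [expecb_succ]
  simp only [Fin.sum_univ_succ, flipBit_cons_zero, flipBit_cons_succ, h01, h10, expecb_add]
  rw [show (fun x => (g (Fin.cons 1 x) - g (Fin.cons 0 x)) ^ 2)
    = fun x => (g (Fin.cons 0 x) - g (Fin.cons 1 x)) ^ 2 from funext fun x => by ring]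
  ring

theorem expecb_mul_le_sqrt_mul_sqrt (p q : (Fin n → Fin 2) → ℝ) :
    expecb (fun x => p x * q x) ≤ √(expecb fun x => p x ^ 2) * √(expecb fun x => q x ^ 2) := by
  rw [← Real.sqrt_mul (by unfold expecb; positivity)]
  refine Real.le_sqrt_of_sq_le ?_
  simp only [expecb, div_pow]
  rw [div_mul_div_comm, ← pow_two]
  gcongr
  exact sum_mul_sq_le_sq_mul_sq univ p q

theorem sqrt_expecb_sq_sub_sqrt_sq_le (p q : (Fin n → Fin 2) → ℝ) :
    (√(expecb fun x => p x ^ 2) - √(expecb fun x => q x ^ 2)) ^ 2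
      ≤ expecb fun x => (p x - q x) ^ 2 := by
  have hexp : (expecb fun x => (p x - q x) ^ 2) = (expecb fun x => p x ^ 2)
      - 2 * expecb (fun x => p x * q x) + expecb fun x => q x ^ 2 := by
    simp only [expecb, sub_sq, sum_add_distrib, sum_sub_distrib, mul_assoc, ← mul_sum]
    ring
  rw [hexp, sub_sq, Real.sq_sqrt (by unfold expecb; positivity),
    Real.sq_sqrt (by unfold expecb; positivity)]
  linarith [expecb_mul_le_sqrt_mul_sqrt p q]

theorem entb_sq_le_energyb : ∀ {n : ℕ} (g : (Fin n → Fin 2) → ℝ),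
    entb (fun x => g x ^ 2) ≤ energyb g / 2
  | 0, g => by simp [entb, energyb, expecb]
  | n + 1, g => by
    set g₀ := fun x => g (Fin.cons 0 x)
    set g₁ := fun x => g (Fin.cons 1 x)
    have ih₀ := entb_sq_le_energyb g₀
    have ih₁ := entb_sq_le_energyb g₁
    have hpair := twoPointEnt_sq_le √(expecb fun x => g₀ x ^ 2) √(expecb fun x => g₁ x ^ 2)
    rw [Real.sq_sqrt (by unfold expecb; positivity), Real.sq_sqrt (by unfold expecb; positivity)]
      at hpair
    have hdist := sqrt_expecb_sq_sub_sqrt_sq_le g₀ g₁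
    rw [entb_succ, energyb_succ]
    linarith

theorem energyb_eq_two_mul_expecb_negPart (g : (Fin n → Fin 2) → ℝ) :
    energyb g = 2 * expecb fun x => ∑ i, max (-(g x - g (flipBit x i))) 0 ^ 2 := by
  have hswap : ∑ x, ∑ i, max (g x - g (flipBit x i)) 0 ^ 2
      = ∑ x, ∑ i, max (-(g x - g (flipBit x i))) 0 ^ 2 := by
    rw [sum_comm]
    conv_rhs => rw [sum_comm]
    refine sum_congr rfl fun i _ => ?_
    refine Fintype.sum_equiv (flipBit_involutive i).toPerm _ _ fun x => ?_
    simp [flipBit_involutive i x]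
  simp only [energyb, expecb, sq_eq_max_sq_add_max_neg_sq (g _ - g _), sum_add_distrib, hswap]
  ring

theorem expecb_mul_neg_log_prb_le_entb {h : (Fin n → Fin 2) → ℝ} {P : (Fin n → Fin 2) → Prop}
    (hh : ∀ x, 0 ≤ h x) (hP : ∀ x, ¬ P x → h x = 0) (hp : 0 < prb P) :
    expecb h * -log (prb P) ≤ entb h := by
  have hJ := sum_mul_log_sum_div_card_le h (univ.filter P) hh fun x hx => hP x (by simpa using hx)
  have hratio : (∑ x, h x) / #(univ.filter P) = expecb h / prb P :=
    (div_div_div_cancel_right₀ (by positivity) _ _).symm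
  have hJ' : expecb h * log (expecb h / prb P) ≤ expecb fun x => h x * log (h x) := by
    rw [← hratio, expecb, expecb, div_mul_eq_mul_div]
    exact div_le_div_of_nonneg_right hJ (by positivity)
  have hsplit : expecb h * log (expecb h / prb P)
      = expecb h * log (expecb h) - expecb h * log (prb P) := by
    rcases eq_or_ne (expecb h) 0 with hm | hm
    · simp [hm]
    · rw [log_div hm hp.ne', mul_sub]
  rw [entb]
  linarith

end LogSobolev

section Quantile

variable {n : ℕ} (f : (Fin n → Fin 2) → ℝ)

theorem quant_le {α z : ℝ} (hα : 0 < α) (hz : α ≤ prb fun x => f x ≤ z) : quant f α ≤ z := by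
  obtain ⟨x₀, hx₀⟩ := Finite.exists_min f
  refine csInf_le ⟨f x₀, fun w hw => ?_⟩ hz
  obtain ⟨x, hx⟩ := filter_nonempty_of_prb_pos (hα.trans_le hw)
  exact (hx₀ x).trans (mem_filter.1 hx).2

theorem le_prb_le_quant {α : ℝ} (hα : 0 < α) (hα1 : α ≤ 1) :
    α ≤ prb fun x => f x ≤ quant f α := by
  obtain ⟨xmax, hxmax⟩ := Finite.exists_max f
  have hall : (prb fun y => f y ≤ f xmax) = 1 := by simp [prb, hxmax]
  have hT : xmax ∈ univ.filter fun x => α ≤ prb fun y => f y ≤ f x :=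
    mem_filter.2 ⟨mem_univ _, hall ▸ hα1⟩
  obtain ⟨x₀, hx₀, hmin⟩ := exists_min_image _ f ⟨xmax, hT⟩
  have hleast : IsLeast {z | α ≤ prb fun x => f x ≤ z} (f x₀) := by
    refine ⟨(mem_filter.1 hx₀).2, fun z hz => ?_⟩
    obtain ⟨x₁, hx₁, hmax⟩ := exists_max_image _ f (filter_nonempty_of_prb_pos (hα.trans_le hz))
    refine (hmin x₁ (mem_filter.2 ⟨mem_univ _, hz.trans (prb_mono fun y hy => ?_)⟩)).trans
      (mem_filter.1 hx₁).2
    exact hmax y (mem_filter.2 ⟨mem_univ _, hy⟩)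
  rw [quant, hleast.csInf_eq]
  exact hleast.1

theorem prb_lt_quant_lt {α : ℝ} (hα : 0 < α) : (prb fun x => f x < quant f α) < α := by
  by_contra! h
  obtain ⟨x₁, hx₁, hmax⟩ := exists_max_image _ f (filter_nonempty_of_prb_pos (hα.trans_le h))
  have := quant_le f hα (h.trans (prb_mono fun y hy => hmax y (mem_filter.2 ⟨mem_univ _, hy⟩)))
  exact (mem_filter.1 hx₁).2.not_ge this

theorem prb_quant_lt_le {γ : ℝ} (hγ : 0 ≤ γ) (hγ1 : γ < 1) :
    (prb fun x => quant f (1 - γ) < f x) ≤ γ := by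
  have h := prb_not fun x => f x ≤ quant f (1 - γ)
  simp only [not_le] at h
  linarith [le_prb_le_quant f (α := 1 - γ) (by linarith) (by linarith)]

theorem le_prb_quant_le {δ : ℝ} (hδ : δ < 1) : δ ≤ prb fun x => quant f (1 - δ) ≤ f x := by
  have h := prb_not fun x => f x < quant f (1 - δ)
  simp only [not_lt] at h
  linarith [prb_lt_quant_lt f (α := 1 - δ) (by linarith)]

end Quantile

theorem sq_mul_prb_mul_neg_log_prb_le {n : ℕ} (f : (Fin n → Fin 2) → ℝ) {v B : ℝ}
    (hcond : ∀ x, ∑ i, (max (-(f x - f (flipBit x i))) 0) ^ 2 ≤ v)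
    (hB : ∀ x i, f (flipBit x i) - f x ≤ B) (hB0 : 0 ≤ B) (a : ℝ) {t : ℝ} (ht : 0 ≤ t) :
    t ^ 2 * prb (fun x => a + B + t ≤ f x) * -log (prb fun x => a < f x)
      ≤ v * prb fun x => a < f x := by
  rcases (prb_nonneg fun x => a < f x).eq_or_lt with hp | hp
  · simp [← hp] -- `log 0 = 0`, so both sides vanish
  set p := prb fun x => a < f x
  set g := fun x => min (max (f x - (a + B)) 0) t
  have hg0 : ∀ x, 0 ≤ g x := fun x => le_min (le_max_right _ _) ht
  have hg_zero : ∀ x, f x ≤ a + B → g x = 0 := fun x hx => by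
    simp [g, max_eq_right (sub_nonpos.2 hx), ht]
  have hg_top : ∀ x, a + B + t ≤ f x → g x = t := fun x hx => by
    simp only [g]
    rw [max_eq_left (by linarith), min_eq_right (by linarith)]
  have hmass : t ^ 2 * prb (fun x => a + B + t ≤ f x) ≤ expecb fun x => g x ^ 2 := by
    rw [← expecb_ite]
    refine expecb_mono fun x => ?_
    split_ifs with hx
    · rw [hg_top x hx]
    · positivity
  have hlocal : ∀ x, ∑ i, max (-(g x - g (flipBit x i))) 0 ^ 2 ≤ if a < f x then v else 0 := by
    intro x
    split_ifs with hx
    · refine (sum_le_sum fun i _ => ?_).trans (hcond x)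
      exact pow_le_pow_left₀ (le_max_right _ _) (max_neg_sub_clamp_le _ _ _ _) 2
    · refine (sum_eq_zero fun i _ => ?_).le
      rw [hg_zero (flipBit x i) (by linarith [hB x i, not_lt.1 hx]), sub_zero,
        max_eq_right (neg_nonpos.2 (hg0 x))]
      simp
  have henergy : energyb g ≤ 2 * (v * p) := by
    rw [energyb_eq_two_mul_expecb_negPart, ← expecb_ite]
    exact mul_le_mul_of_nonneg_left (expecb_mono hlocal) zero_le_two
  have hsupp : ∀ x, ¬ a < f x → g x ^ 2 = 0 := fun x hx => by
    rw [hg_zero x (by linarith [not_lt.1 hx]), zero_pow two_ne_zero]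
  calc t ^ 2 * prb (fun x => a + B + t ≤ f x) * -log p
      ≤ (expecb fun x => g x ^ 2) * -log p :=
        mul_le_mul_of_nonneg_right hmass (neg_nonneg.2 (log_nonpos hp.le (prb_le_one _)))
    _ ≤ entb fun x => g x ^ 2 :=
        expecb_mul_neg_log_prb_le_entb (fun x => sq_nonneg _) hsupp hp
    _ ≤ energyb g / 2 := entb_sq_le_energyb g
    _ ≤ v * p := by linarith

theorem log_exp_two_div_le {γ : ℝ} (hγ : 0 < γ) (hγ1 : γ ≤ 1 / 2) :
    log (exp 2 / (2 * γ)) ≤ 72 / 5 * -log γ := by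
  have h2 : log 2 ≤ -log γ := by
    rw [← log_inv]
    exact log_le_log two_pos (by rw [le_inv_comm₀ two_pos hγ]; linarith)
  rw [log_div (exp_ne_zero 2) (by positivity), log_exp,
    log_mul two_ne_zero hγ.ne']
  linarith [log_two_gt_d9]

theorem sq_le_of_sq_mul_mul_neg_log_le {t v δ γ p q : ℝ} (hδ : 0 < δ) (hδq : δ ≤ q)
    (hqp : q ≤ p) (hpγ : p ≤ γ) (hγ : γ ≤ 1 / 2) (h : t ^ 2 * q * -log p ≤ v * p) :
    t ^ 2 ≤ 72 / 5 * v * γ / (δ * log (exp 2 / (2 * γ))) := by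
  have hp : 0 < p := by linarith
  have hγ0 : 0 < γ := by linarith
  have hlogγ : 0 ≤ -log γ := neg_nonneg.2 (log_nonpos hγ0.le (by linarith))
  have hmono : t ^ 2 * δ * -log γ * p ≤ t ^ 2 * q * -log p * γ := by
    have hlogp : -log γ ≤ -log p := neg_le_neg (log_le_log hp hpγ)
    have hq : 0 ≤ t ^ 2 * q := mul_nonneg (sq_nonneg t) (hδ.le.trans hδq)
    gcongr
    exact mul_nonneg hq (hlogγ.trans hlogp)
  have hkey : t ^ 2 * δ * -log γ ≤ v * γ :=
    le_of_mul_le_mul_right (by linarith [mul_le_mul_of_nonneg_right h hγ0.le]) hp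
  have hL : 0 < log (exp 2 / (2 * γ)) := by
    rw [log_div (exp_ne_zero 2) (by positivity), log_exp]
    linarith [log_nonpos (by positivity : (0 : ℝ) ≤ 2 * γ) (by linarith)]
  rw [le_div_iff₀ (by positivity)]
  calc t ^ 2 * (δ * log (exp 2 / (2 * γ)))
      ≤ t ^ 2 * (δ * (72 / 5 * -log γ)) := by gcongr; exact log_exp_two_div_le hγ0 hγ
    _ = 72 / 5 * (t ^ 2 * δ * -log γ) := by ring
    _ ≤ 72 / 5 * v * γ := by linarith

theorem stmt_7_general {n : ℕ} (f : (Fin n → Fin 2) → ℝ) (v : ℝ)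
    (hcond : ∀ x, ∑ i, (max (-(f x - f (flipBit x i))) 0) ^ 2 ≤ v)
    (B : ℝ)
    (hB : IsGreatest (Set.range fun p : (Fin n → Fin 2) × Fin n =>
      |f p.1 - f (flipBit p.1 p.2)|) B)
    (δ γ : ℝ) (hδ : 0 < δ) (hδγ : δ < γ) (hγ : γ ≤ 1 / 2) :
    quant f (1 - δ) - quant f (1 - γ) ≤
      B + Real.sqrt ((72 / 5) * v * γ / (δ * Real.log (Real.exp 2 / (2 * γ)))) := by
  set a := quant f (1 - γ)
  set t := quant f (1 - δ) - a - B
  rcases le_or_gt t 0 with ht | ht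
  · linarith [Real.sqrt_nonneg ((72 / 5) * v * γ / (δ * log (exp 2 / (2 * γ))))]
  have hB0 : 0 ≤ B := by
    obtain ⟨_, hp⟩ := hB.1
    exact hp ▸ abs_nonneg _
  have hneighbour : ∀ x i, f (flipBit x i) - f x ≤ B := fun x i =>
    (le_abs_self _).trans ((abs_sub_comm _ _).trans_le (hB.2 ⟨(x, i), rfl⟩))
  have hupper := prb_quant_lt_le f (hδ.trans hδγ).le (by linarith)
  have hlower : δ ≤ prb fun x => a + B + t ≤ f x := by
    simpa [t] using le_prb_quant_le f (by linarith : δ < 1)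
  have hsub : (prb fun x => a + B + t ≤ f x) ≤ prb fun x => a < f x :=
    prb_mono fun x hx => by linarith
  have hsq := sq_le_of_sq_mul_mul_neg_log_le hδ hlower hsub hupper hγ
    (sq_mul_prb_mul_neg_log_prb_le f hcond hneighbour hB0 a ht.le)
  linarith [(Real.le_sqrt' ht).2 hsq]

theorem stmt_7 {n : ℕ} (f : (Fin n → Fin 2) → ℝ) (v : ℝ) (hv : 0 < v)
    (hcond : ∀ x, ∑ i, (max (-(f x - f (flipBit x i))) 0) ^ 2 ≤ v)
    (B : ℝ)
    (hB : IsGreatest (Set.range fun p : (Fin n → Fin 2) × Fin n =>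
      |f p.1 - f (flipBit p.1 p.2)|) B)
    (δ γ : ℝ) (hδ : 0 < δ) (hδγ : δ < γ) (hγ : γ ≤ 1 / 2) :
    quant f (1 - δ) - quant f (1 - γ) ≤
      B + Real.sqrt ((72 / 5) * v * γ / (δ * Real.log (Real.exp 2 / (2 * γ)))) :=
  stmt_7_general f v hcond B hB δ γ hδ hδγ hγ
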